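/- Let b(n) denote the number of partition triples π = (π₁, π₂, π₃) of n such that π₁ consists of distinct odd parts, and π₂ and π₃ consist of parts divisible by 4 (with b(0) = 1). Then b(3n+2) ≡ 0 (mod 3) for all n ≥ 0. -/

import Mathlib

open PowerSeries

/-- `bTriple n` is the number of partition triples `(π₁, π₂, π₃)` of `n` such that
`π₁` has distinct odd parts and all parts of `π₂` and `π₃` are (positive and)
divisible by `4`. -/
noncomputable def bTriple (n : ℕ) : ℕ :=
  Nat.card {t : Multiset ℕ × Multiset ℕ × Multiset ℕ //
    t.1.sum + t.2.1.sum + t.2.2.sum = n ∧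
    t.1.Nodup ∧ (∀ x ∈ t.1, Odd x) ∧
    (∀ x ∈ t.2.1, 0 < x ∧ 4 ∣ x) ∧
    (∀ x ∈ t.2.2, 0 < x ∧ 4 ∣ x)}

/-!
Since `(-q; q²)_∞ = f₂²/(f₁ f₄)`, the generating function of `b` is `(-q; q²)_∞ (q⁴; q⁴)_∞ / f₄³`,
and Jacobi's triple product identity gives `(-q; q²)_∞ (q⁴; q⁴)_∞ = ∑_{k ∈ ℤ} q^{2k² + k}`. Hence
`b(m)` is the sum over `k` of the coefficients of `q^{m - (2k² + k)}` in `1/f₄³`. The coefficient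
of `q^j` in `1/f₄³` counts triples of partitions into multiples of `4` of total size `j`; rotating
the triple is a permutation of order `3` without fixed points when `3 ∤ j`, so this count is then
divisible by `3`. Finally `2k² + k ≢ 2 (mod 3)`, so `3 ∤ 3n + 2 - (2k² + k)` for every `k`.

The triple product identity is proved in its finite form
`(-q; q²)_{2n} = ∑_{|k| ≤ n} q^{2k² + k} [2n, n + k]_{q⁴}` by induction on `n`, through a
three-term recurrence for Gaussian binomial coefficients; the infinite products are compared with
finite ones modulo `X^M`.
-/

open Finset Filter
open scoped PowerSeries.WithPiTopology

section WeightSeries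

noncomputable def weightSeries {α : Type*} (w : α → ℕ) : ℤ⟦X⟧ :=
  PowerSeries.mk fun n ↦ Nat.card {a // w a = n}

variable {α β : Type*}

def fiberAddEquiv (w₁ : α → ℕ) (w₂ : β → ℕ) (n : ℕ) :
    {x : α × β // w₁ x.1 + w₂ x.2 = n} ≃
      Σ ij : antidiagonal n, {a // w₁ a = ij.1.1} × {b // w₂ b = ij.1.2} where
  toFun x := ⟨⟨(w₁ x.1.1, w₂ x.1.2), mem_antidiagonal.2 x.2⟩, ⟨x.1.1, rfl⟩, ⟨x.1.2, rfl⟩⟩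
  invFun y := ⟨(y.2.1, y.2.2), by rw [y.2.1.2, y.2.2.2]; exact mem_antidiagonal.1 y.1.2⟩
  left_inv _ := rfl
  right_inv := by
    rintro ⟨⟨⟨i, j⟩, hij⟩, ⟨a, ha⟩, ⟨b, hb⟩⟩
    dsimp only at ha hb
    subst ha hb
    rfl

variable {w₁ : α → ℕ} {w₂ : β → ℕ}
  (h₁ : ∀ n, Finite {a // w₁ a = n}) (h₂ : ∀ n, Finite {b // w₂ b = n})
include h₁ h₂

theorem finite_fiber_add (n : ℕ) : Finite {x : α × β // w₁ x.1 + w₂ x.2 = n} :=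
  .of_equiv _ (fiberAddEquiv w₁ w₂ n).symm

theorem weightSeries_add :
    weightSeries (fun x : α × β ↦ w₁ x.1 + w₂ x.2) = weightSeries w₁ * weightSeries w₂ := by
  ext n
  simp only [weightSeries, coeff_mul, coeff_mk, Nat.card_congr (fiberAddEquiv w₁ w₂ n),
    Nat.card_sigma, Nat.card_prod, Nat.cast_sum, Nat.cast_mul]
  exact sum_coe_sort _ fun ij : ℕ × ℕ ↦
    (Nat.card {a // w₁ a = ij.1} * Nat.card {b // w₂ b = ij.2} : ℤ)

end WeightSeries

theorem three_dvd_card_triples {α : Type*} (w : α → ℕ) {j : ℕ} (hj : ¬ 3 ∣ j)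
    [Finite {x : α × α × α // w x.1 + (w x.2.1 + w x.2.2) = j}] :
    3 ∣ Nat.card {x : α × α × α // w x.1 + (w x.2.1 + w x.2.2) = j} := by
  classical
  let T := {x : α × α × α // w x.1 + (w x.2.1 + w x.2.2) = j}
  have : Fintype T := .ofFinite T
  let rotate : Function.End T := fun x ↦
    ⟨(x.1.2.2, x.1.1, x.1.2.1), by have := x.2; dsimp only at this ⊢; omega⟩
  have hfix : Function.fixedPoints rotate = ∅ := by
    refine Set.eq_empty_of_forall_notMem fun ⟨⟨a, b, c⟩, hx⟩ hrot ↦ hj ?_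
    have : c = a ∧ a = b ∧ b = c := by simpa [rotate] using congrArg Subtype.val hrot
    obtain ⟨rfl, rfl, -⟩ := this
    exact ⟨w c, by simp only at hx; omega⟩
  have := Equiv.Perm.card_fixedPoints_modEq (p := 3) (n := 1) (f := rotate) rfl
  simp only [hfix, Fintype.card_eq_zero] at this
  rw [Nat.card_eq_fintype_card]
  exact Nat.dvd_of_mod_eq_zero this

theorem three_dvd_coeff_weightSeries_pow_three {α : Type*} {w : α → ℕ}
    (hw : ∀ n, Finite {a // w a = n}) {j : ℕ} (hj : ¬ 3 ∣ j) :
    (3 : ℤ) ∣ coeff j (weightSeries w ^ 3) := by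
  have := finite_fiber_add hw (finite_fiber_add hw hw) j
  rw [pow_three, ← weightSeries_add hw hw, ← weightSeries_add hw (finite_fiber_add hw hw),
    weightSeries, coeff_mk]
  exact Int.natCast_dvd_natCast.2 (three_dvd_card_triples w hj)

section Partitions

variable (P : Multiset ℕ → Prop) (hP : ∀ m, P m → ∀ x ∈ m, 0 < x)
include hP

def subtypeSumEquivPartition (n : ℕ) :
    {m : {m // P m} // m.1.sum = n} ≃ {p : n.Partition // P p.parts} where
  toFun m := ⟨⟨m.1.1, hP _ m.1.2 _, m.2⟩, m.1.2⟩
  invFun p := ⟨⟨p.1.parts, p.2⟩, p.1.parts_sum⟩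
  left_inv _ := rfl
  right_inv _ := rfl

theorem finite_subtype_sum (n : ℕ) : Finite {m : {m // P m} // m.1.sum = n} :=
  .of_equiv _ (subtypeSumEquivPartition P hP n).symm

theorem weightSeries_eq_mk_card_partition [DecidablePred P] :
    weightSeries (fun m : {m // P m} ↦ m.1.sum) =
      PowerSeries.mk fun n ↦ (#{p : n.Partition | P p.parts} : ℤ) := by
  ext n
  rw [weightSeries, coeff_mk, coeff_mk, Nat.card_congr (subtypeSumEquivPartition P hP n),
    Nat.card_eq_fintype_card, Fintype.card_subtype]

end Partitions

section ModXPow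
variable {R : Type*} [CommRing R] {M : ℕ}

local notation "π" => Ideal.Quotient.mk (Ideal.span {(X : R⟦X⟧) ^ M})

theorem mk_X_pow_eq_zero {e : ℕ} (h : M ≤ e) : π (X ^ e) = 0 :=
  Ideal.Quotient.eq_zero_iff_mem.2 <| Ideal.mem_span_singleton.2 <| pow_dvd_pow X h

theorem mk_eq_mk_iff_coeff {a b : R⟦X⟧} : π a = π b ↔ ∀ d < M, coeff d a = coeff d b := by
  simp only [Ideal.Quotient.mk_eq_mk_iff_sub_mem, Ideal.mem_span_singleton, X_pow_dvd_iff,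
    map_sub, sub_eq_zero]

theorem mk_eq_mk_prod_range_of_hasProd [TopologicalSpace R] [DiscreteTopology R]
    {f : ℕ → R⟦X⟧} {a : R⟦X⟧} (hf : HasProd f a) {m : ℕ} (hm : ∀ i, m ≤ i → π (f i) = 1) :
    π a = π (∏ i ∈ range m, f i) := by
  classical
  have hev : ∀ᶠ s in atTop, ∀ d ∈ range M, coeff d (∏ i ∈ s, f i) = coeff d a :=
    (eventually_all_finset _).2 fun d _ ↦ by
      simpa [nhds_discrete] using (WithPiTopology.tendsto_iff_coeff_tendsto R _ _ _).1 hf d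
  obtain ⟨s, hs⟩ := eventually_atTop.1 hev
  calc π a = π (∏ i ∈ s ∪ range m, f i) :=
        (mk_eq_mk_iff_coeff.2 fun d hd ↦ hs _ subset_union_left d (mem_range.2 hd)).symm
    _ = π (∏ i ∈ range m, f i) := by
      rw [← prod_sdiff subset_union_right, map_mul, map_prod, prod_eq_one, one_mul]
      intro i hi
      exact hm i (by simpa using (mem_sdiff.1 hi).2)

end ModXPow

noncomputable def distinctOddSeries : ℤ⟦X⟧ :=
  weightSeries fun m : {m : Multiset ℕ // m.Nodup ∧ ∀ x ∈ m, Odd x} ↦ m.1.sum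

noncomputable def divFourSeries : ℤ⟦X⟧ :=
  weightSeries fun m : {m : Multiset ℕ // ∀ x ∈ m, 0 < x ∧ 4 ∣ x} ↦ m.1.sum

theorem distinctOddSeries_eq_genFun :
    distinctOddSeries = Nat.Partition.genFun fun i c ↦ if Odd i ∧ c = 1 then 1 else 0 := by
  rw [distinctOddSeries, weightSeries_eq_mk_card_partition _ fun m hm x hx ↦ (hm.2 x hx).pos]
  ext n
  rw [coeff_mk, Nat.Partition.coeff_genFun, card_filter, Nat.cast_sum]
  refine sum_congr rfl fun p _ ↦ ?_
  rw [Finsupp.prod, prod_boole]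
  simp only [Multiset.toFinsupp_support, Multiset.toFinsupp_apply, Multiset.mem_toFinset,
    Multiset.nodup_iff_count_eq_one]
  grind

theorem hasProd_distinctOddSeries : HasProd (fun j ↦ 1 + X ^ (2 * j + 1)) distinctOddSeries := by
  have key := Nat.Partition.hasProd_genFun (R := ℤ) fun i c ↦ if Odd i ∧ c = 1 then 1 else 0
  rw [← Function.Injective.hasProd_iff (g := (2 * ·)) (mul_right_injective₀ two_ne_zero)] at key
  · rw [distinctOddSeries_eq_genFun]
    refine key.congr_fun fun j ↦ ?_
    rw [Function.comp_apply, tsum_eq_single 0 fun k hk ↦ by simp [hk, smul_eq_C_mul]]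
    simp [smul_eq_C_mul]
  · intro i hi
    have : ¬ Odd (i + 1) := fun ⟨r, hr⟩ ↦ hi ⟨r, by dsimp only; omega⟩
    simp [this, smul_eq_C_mul]

theorem divFourSeries_eq_mk_card_restricted :
    divFourSeries = PowerSeries.mk fun n ↦ (#(Nat.Partition.restricted n (4 ∣ ·)) : ℤ) := by
  rw [divFourSeries, weightSeries_eq_mk_card_partition _ fun m hm x hx ↦ (hm x hx).1]
  congr! 3 with n
  refine congrArg card <| filter_congr fun (p : n.Partition) _ ↦ ?_
  exact forall₂_congr fun x hx ↦ and_iff_right (p.parts_pos hx)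

theorem hasProd_divFourSeries :
    HasProd (fun j ↦ ∑' k, X ^ ((4 * j + 4) * k)) divFourSeries := by
  have key := Nat.Partition.hasProd_powerSeriesMk_card_restricted ℤ (4 ∣ ·)
  rw [← Function.Injective.hasProd_iff (g := (4 * · + 3))
    fun a b h ↦ by dsimp only at h; omega] at key
  · rw [divFourSeries_eq_mk_card_restricted]
    exact key.congr_fun fun j ↦ by simp [show 4 * j + 3 + 1 = 4 * j + 4 by ring]
  · intro i hi
    rw [if_neg]
    rintro ⟨r, hr⟩
    exact hi ⟨r - 1, by dsimp only; omega⟩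

def bTripleEquiv (n : ℕ) :
    {t : Multiset ℕ × Multiset ℕ × Multiset ℕ //
      t.1.sum + t.2.1.sum + t.2.2.sum = n ∧ t.1.Nodup ∧ (∀ x ∈ t.1, Odd x) ∧
      (∀ x ∈ t.2.1, 0 < x ∧ 4 ∣ x) ∧ (∀ x ∈ t.2.2, 0 < x ∧ 4 ∣ x)} ≃
    {x : {m : Multiset ℕ // m.Nodup ∧ ∀ x ∈ m, Odd x} ×
        {m : Multiset ℕ // ∀ x ∈ m, 0 < x ∧ 4 ∣ x} × {m : Multiset ℕ // ∀ x ∈ m, 0 < x ∧ 4 ∣ x} //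
      x.1.1.sum + (x.2.1.1.sum + x.2.2.1.sum) = n} where
  toFun t := ⟨(⟨t.1.1, t.2.2.1, t.2.2.2.1⟩, ⟨t.1.2.1, t.2.2.2.2.1⟩, ⟨t.1.2.2, t.2.2.2.2.2⟩),
    (add_assoc ..).symm.trans t.2.1⟩
  invFun x := ⟨(x.1.1.1, x.1.2.1.1, x.1.2.2.1),
    (add_assoc ..).trans x.2, x.1.1.2.1, x.1.1.2.2, x.1.2.1.2, x.1.2.2.2⟩
  left_inv _ := rfl
  right_inv _ := rfl

theorem bTriple_eq_coeff (n : ℕ) :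
    (bTriple n : ℤ) = coeff n (distinctOddSeries * divFourSeries ^ 2) := by
  have hD := finite_subtype_sum (fun m : Multiset ℕ ↦ m.Nodup ∧ ∀ x ∈ m, Odd x)
    fun m hm x hx ↦ (hm.2 x hx).pos
  have hF := finite_subtype_sum (fun m : Multiset ℕ ↦ ∀ x ∈ m, 0 < x ∧ 4 ∣ x)
    fun m hm x hx ↦ (hm x hx).1
  rw [distinctOddSeries, divFourSeries, sq, ← weightSeries_add hF hF,
    ← weightSeries_add hD (finite_fiber_add hF hF), weightSeries, coeff_mk, bTriple,
    Nat.card_congr (bTripleEquiv n)]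

theorem two_mul_sq_add_self_nonneg (k : ℤ) : 0 ≤ 2 * k ^ 2 + k := by
  nlinarith [sq_nonneg (4 * k + 1)]

theorem abs_le_two_mul_sq_add_self (k : ℤ) : |k| ≤ 2 * k ^ 2 + k := by
  rcases abs_cases k with ⟨h, _⟩ | ⟨h, _⟩ <;> nlinarith

theorem two_mul_sq_add_self_toNat_mod_three (k : ℤ) : (2 * k ^ 2 + k).toNat % 3 ≠ 2 := by
  have h : (2 * k ^ 2 + k) % 3 ≠ 2 := by
    rcases (by omega : k % 3 = 0 ∨ k % 3 = 1 ∨ k % 3 = 2) with h | h | h <;>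
      simp [pow_two, Int.add_emod, Int.mul_emod, h]
  have := Int.toNat_of_nonneg (two_mul_sq_add_self_nonneg k)
  omega

section JacobiTripleProduct

/-- `qPoch m = (q⁴; q⁴)_m`. -/
noncomputable def qPoch (m : ℕ) : ℤ⟦X⟧ := ∏ j ∈ range m, (1 - X ^ (4 * j + 4))

theorem qPoch_zero : qPoch 0 = 1 := prod_range_zero ..

theorem qPoch_succ (m : ℕ) : qPoch (m + 1) = qPoch m * (1 - X ^ (4 * m + 4)) :=
  prod_range_succ ..

theorem isUnit_qPoch (m : ℕ) : IsUnit (qPoch m) := by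
  simp [isUnit_iff_constantCoeff, qPoch]

/-- `oddPoch m = (-q; q²)_m`. -/
noncomputable def oddPoch (m : ℕ) : ℤ⟦X⟧ := ∏ j ∈ range m, (1 + X ^ (2 * j + 1))

theorem oddPoch_two_mul_succ (n : ℕ) :
    oddPoch (2 * (n + 1)) = oddPoch (2 * n) * ((1 + X ^ (4 * n + 1)) * (1 + X ^ (4 * n + 3))) := by
  rw [oddPoch, show 2 * (n + 1) = 2 * n + 1 + 1 by ring, prod_range_succ, prod_range_succ,
    ← oddPoch]
  ring

/-- `gaussBinom a b` is the Gaussian binomial coefficient `[a + b, a]` in base `q⁴`. -/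
noncomputable def gaussBinom (a b : ℕ) : ℤ⟦X⟧ := qPoch (a + b) * Ring.inverse (qPoch a * qPoch b)

theorem gaussBinom_mul (a b : ℕ) : gaussBinom a b * (qPoch a * qPoch b) = qPoch (a + b) := by
  rw [gaussBinom, mul_assoc, Ring.inverse_mul_cancel _ ((isUnit_qPoch a).mul (isUnit_qPoch b)),
    mul_one]

local notation "K" => FractionRing ℤ⟦X⟧
local notation "ι" => algebraMap ℤ⟦X⟧ (FractionRing ℤ⟦X⟧)

theorem algebraMap_X_ne_zero : ι X ≠ 0 :=
  (map_ne_zero_iff _ (IsFractionRing.injective _ _)).2 X_ne_zero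

theorem algebraMap_qPoch_ne_zero (m : ℕ) : ι (qPoch m) ≠ 0 :=
  (map_ne_zero_iff _ (IsFractionRing.injective _ _)).2 (isUnit_qPoch m).ne_zero

theorem algebraMap_qPoch_succ (m : ℕ) :
    ι (qPoch (m + 1)) = ι (qPoch m) * (1 - ι X ^ (4 * m + 4)) := by
  rw [qPoch_succ, map_mul, map_sub, map_one, map_pow]

/-- `gaussBinom` in the fraction field, extended by `0` to negative indices so that Pascal's rule
needs no boundary cases. -/
noncomputable def qBinom (r s : ℤ) : K :=
  if 0 ≤ r ∧ 0 ≤ s then ι (gaussBinom r.toNat s.toNat) else 0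

theorem qBinom_natCast (a b : ℕ) :
    qBinom a b = ι (qPoch (a + b)) / (ι (qPoch a) * ι (qPoch b)) := by
  rw [qBinom, if_pos ⟨a.cast_nonneg, b.cast_nonneg⟩, Int.toNat_natCast, Int.toNat_natCast,
    eq_div_iff (mul_ne_zero (algebraMap_qPoch_ne_zero a) (algebraMap_qPoch_ne_zero b)),
    ← map_mul, ← map_mul, gaussBinom_mul]

theorem qBinom_of_neg_left {r : ℤ} (s : ℤ) (hr : r < 0) : qBinom r s = 0 := by
  rw [qBinom, if_neg (by omega)]

theorem qBinom_of_neg_right (r : ℤ) {s : ℤ} (hs : s < 0) : qBinom r s = 0 := by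
  rw [qBinom, if_neg (by omega)]

theorem qBinom_comm (r s : ℤ) : qBinom r s = qBinom s r := by
  by_cases h : 0 ≤ r ∧ 0 ≤ s
  · lift r to ℕ using h.1
    lift s to ℕ using h.2
    rw [qBinom_natCast, qBinom_natCast, add_comm, mul_comm]
  · rw [qBinom, qBinom, if_neg h, if_neg (by tauto)]

theorem qBinom_zero_left {s : ℤ} (hs : 0 ≤ s) : qBinom 0 s = 1 := by
  lift s to ℕ using hs
  rw [← Nat.cast_zero, qBinom_natCast, zero_add, qPoch_zero, map_one, one_mul,
    div_self (algebraMap_qPoch_ne_zero s)]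

theorem qBinom_zero_right {r : ℤ} (hr : 0 ≤ r) : qBinom r 0 = 1 := by
  rw [qBinom_comm, qBinom_zero_left hr]

theorem qBinom_natCast_pascal (a b : ℕ) :
    qBinom (a + 1 : ℕ) (b + 1 : ℕ) =
      qBinom a (b + 1 : ℕ) + ι X ^ (4 * a + 4) * qBinom (a + 1 : ℕ) b := by
  rw [qBinom_natCast, qBinom_natCast, qBinom_natCast, show a + 1 + (b + 1) = a + b + 1 + 1 by ring,
    show a + (b + 1) = a + b + 1 by ring, show a + 1 + b = a + b + 1 by ring]
  have hA := algebraMap_qPoch_succ a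
  have hB := algebraMap_qPoch_succ b
  have hC := algebraMap_qPoch_succ (a + b + 1)
  have := algebraMap_qPoch_ne_zero a
  have := algebraMap_qPoch_ne_zero b
  have := algebraMap_qPoch_ne_zero (a + 1)
  have := algebraMap_qPoch_ne_zero (b + 1)
  field_simp
  linear_combination ι (qPoch a) * ι (qPoch b) * hC - ι (qPoch (a + b + 1)) * ι (qPoch b) * hA -
    ι (qPoch (a + b + 1)) * ι (qPoch a) * ι X ^ (4 * a + 4) * hB

theorem qBinom_pascal {r s : ℤ} (h : -1 ≤ r + s) :
    qBinom (r + 1) (s + 1) = qBinom r (s + 1) + ι X ^ (4 * (r + 1)) * qBinom (r + 1) s := by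
  obtain hr | rfl | hr : r < -1 ∨ r = -1 ∨ 0 ≤ r := by omega
  · simp [qBinom_of_neg_left _ (show r < 0 by omega),
      qBinom_of_neg_left _ (show r + 1 < 0 by omega)]
  · simp [qBinom_of_neg_left _ (show (-1 : ℤ) < 0 by omega),
      qBinom_zero_left (show 0 ≤ s + 1 by omega), qBinom_zero_left (show 0 ≤ s by omega)]
  obtain hs | rfl | hs : s < -1 ∨ s = -1 ∨ 0 ≤ s := by omega
  · simp [qBinom_of_neg_right _ (show s < 0 by omega),
      qBinom_of_neg_right _ (show s + 1 < 0 by omega)]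
  · simp [qBinom_of_neg_right _ (show (-1 : ℤ) < 0 by omega), qBinom_zero_right hr,
      qBinom_zero_right (show 0 ≤ r + 1 by omega)]
  lift r to ℕ using hr
  lift s to ℕ using hs
  exact_mod_cast qBinom_natCast_pascal r s

theorem qBinom_pascal' {r s : ℤ} (h : -1 ≤ r + s) :
    qBinom (r + 1) (s + 1) = ι X ^ (4 * (s + 1)) * qBinom r (s + 1) + qBinom (r + 1) s := by
  rw [qBinom_comm, qBinom_pascal (by omega), qBinom_comm (s + 1), qBinom_comm s, add_comm]

theorem qBinom_three_term {r s : ℤ} (h : 0 ≤ r + s) :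
    qBinom (r + 1) (s + 1) = (1 + ι X ^ (4 * (r + s + 1))) * qBinom r s +
      ι X ^ (4 * (s + 1)) * qBinom (r - 1) (s + 1) +
      ι X ^ (4 * (r + 1)) * qBinom (r + 1) (s - 1) := by
  have hA := qBinom_pascal (r := r) (s := s) (by omega)
  have hB := qBinom_pascal' (r := r - 1) (s := s) (by omega)
  have hD := qBinom_pascal' (r := r) (s := s - 1) (by omega)
  simp only [sub_add_cancel] at hB hD
  have hy : ι X ^ (4 * (r + 1)) * ι X ^ (4 * s) = ι X ^ (4 * (r + s + 1)) := by
    rw [← zpow_add₀ algebraMap_X_ne_zero]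
    congr 1
    ring
  linear_combination hA + hB + ι X ^ (4 * (r + 1)) * hD + qBinom r s * hy

/-- The summand `q^{2k² + k} [2n, n + k]_{q⁴}` of the finite triple product. -/
noncomputable def tripleProductTerm (n : ℕ) (k : ℤ) : K :=
  ι X ^ (2 * k ^ 2 + k) * qBinom (n + k) (n - k)

theorem tripleProductTerm_succ (n : ℕ) (k : ℤ) :
    tripleProductTerm (n + 1) k = (1 + ι X ^ (8 * n + 4)) * tripleProductTerm n k +
      ι X ^ (4 * n + 3) * tripleProductTerm n (k - 1) +
      ι X ^ (4 * n + 1) * tripleProductTerm n (k + 1) := by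
  have h := qBinom_three_term (r := n + k) (s := n - k) (by omega)
  simp only [tripleProductTerm]
  rw [show (↑(n + 1) : ℤ) + k = n + k + 1 by push_cast; ring,
    show (↑(n + 1) : ℤ) - k = n - k + 1 by push_cast; ring,
    show (n : ℤ) + (k - 1) = n + k - 1 by ring, show (n : ℤ) - (k - 1) = n - k + 1 by ring,
    show (n : ℤ) + (k + 1) = n + k + 1 by ring, show (n : ℤ) - (k + 1) = n - k - 1 by ring, h]
  -- `2k² + k + 4(n - k + 1) = 2(k - 1)² + (k - 1) + 4n + 3`, and symmetrically for `k + 1`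
  simp only [← zpow_natCast, mul_add, add_mul, ← mul_assoc, ← zpow_add₀ algebraMap_X_ne_zero]
  push_cast
  ring_nf

theorem tripleProductTerm_eq_zero {n : ℕ} {k : ℤ} (h : n < |k|) : tripleProductTerm n k = 0 := by
  rw [tripleProductTerm, mul_eq_zero]
  right
  rcases lt_abs.1 h with h | h
  · exact qBinom_of_neg_right _ (by omega)
  · exact qBinom_of_neg_left _ (by omega)

noncomputable def tripleProductSum (n : ℕ) : K :=
  ∑ k ∈ Ico (-n : ℤ) (n + 1), tripleProductTerm n k

theorem sum_Ico_tripleProductTerm {n : ℕ} {a b : ℤ} (ha : a ≤ -n) (hb : n < b) :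
    ∑ k ∈ Ico a b, tripleProductTerm n k = tripleProductSum n := by
  refine (sum_subset (Ico_subset_Ico ha (by omega)) fun k hk hk' ↦ ?_).symm
  simp only [mem_Ico] at hk hk'
  exact tripleProductTerm_eq_zero (lt_abs.2 (by omega))

theorem sum_Ico_tripleProductTerm_add {n : ℕ} (c : ℤ) (hc : |c| ≤ 1) :
    ∑ k ∈ Ico (-(n + 1 : ℕ) : ℤ) ((n + 1 : ℕ) + 1), tripleProductTerm n (k + c) =
      tripleProductSum n := by
  rw [sum_Ico_add' (fun k ↦ tripleProductTerm n k)]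
  rw [abs_le] at hc
  exact sum_Ico_tripleProductTerm (by omega) (by omega)

theorem algebraMap_oddPoch (n : ℕ) : ι (oddPoch (2 * n)) = tripleProductSum n := by
  induction n with
  | zero =>
    rw [tripleProductSum, Nat.cast_zero, neg_zero, zero_add, show Ico (0 : ℤ) 1 = {0} from rfl]
    simp [oddPoch, tripleProductTerm, qBinom_zero_left]
  | succ n ih =>
    have h₀ := sum_Ico_tripleProductTerm_add (n := n) 0 (by simp)
    have hdown := sum_Ico_tripleProductTerm_add (n := n) (-1) (by simp)
    have hup := sum_Ico_tripleProductTerm_add (n := n) 1 (by simp)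
    simp only [add_zero, ← sub_eq_add_neg] at h₀ hdown
    rw [tripleProductSum, oddPoch_two_mul_succ, map_mul, ih]
    simp only [tripleProductTerm_succ, sum_add_distrib, ← mul_sum, h₀, hdown, hup, map_mul, map_add,
      map_one, map_pow]
    ring

theorem oddPoch_eq_sum (n : ℕ) :
    oddPoch (2 * n) = ∑ k ∈ Ico (-n : ℤ) (n + 1),
      X ^ (2 * k ^ 2 + k).toNat * gaussBinom (n + k).toNat (n - k).toNat := by
  apply IsFractionRing.injective ℤ⟦X⟧ K
  rw [algebraMap_oddPoch, tripleProductSum, map_sum]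
  refine sum_congr rfl fun k hk ↦ ?_
  rw [mem_Ico] at hk
  rw [tripleProductTerm, qBinom, if_pos (by omega), map_mul, map_pow, ← zpow_natCast,
    Int.toNat_of_nonneg (two_mul_sq_add_self_nonneg k)]

end JacobiTripleProduct

section TruncatedTripleProduct
variable {M : ℕ}

local notation "π" => Ideal.Quotient.mk (Ideal.span {(X : ℤ⟦X⟧) ^ M})

theorem mk_qPoch_of_le {N b : ℕ} (hN : M ≤ 4 * N + 4) (hb : N ≤ b) :
    π (qPoch b) = π (qPoch N) := by
  induction b, hb using Nat.le_induction with
  | base => rfl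
  | succ b hb ih =>
    rw [qPoch_succ, map_mul, map_sub, mk_X_pow_eq_zero (by omega), ih, map_one, sub_zero, mul_one]

theorem mk_gaussBinom_mul_qPoch {N a b : ℕ} (hN : M ≤ 4 * N + 4) (ha : N ≤ a) (hb : N ≤ b) :
    π (gaussBinom a b * qPoch N) = 1 := by
  have h := congrArg π (gaussBinom_mul a b)
  rw [map_mul, map_mul, mk_qPoch_of_le hN ha, mk_qPoch_of_le hN hb,
    mk_qPoch_of_le hN (show N ≤ a + b by omega)] at h
  have hu := (isUnit_qPoch N).map π
  rw [map_mul]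
  apply hu.mul_left_cancel
  linear_combination h

theorem mk_oddPoch_mul_qPoch {N n : ℕ} (hN : M ≤ 4 * N + 4) (hn : N + M ≤ n) :
    π (oddPoch (2 * n) * qPoch N) = π (∑ k ∈ Ico (-n : ℤ) (n + 1), X ^ (2 * k ^ 2 + k).toNat) := by
  rw [oddPoch_eq_sum, sum_mul, map_sum, map_sum]
  refine sum_congr rfl fun k _ ↦ ?_
  by_cases hk' : M ≤ (2 * k ^ 2 + k).toNat
  · rw [mul_assoc, map_mul, mk_X_pow_eq_zero hk', zero_mul]
  · have hkM : |k| < M := by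
      have := abs_le_two_mul_sq_add_self k
      omega
    rw [abs_lt] at hkM
    rw [mul_assoc, map_mul, mk_gaussBinom_mul_qPoch hN (by omega) (by omega), mul_one]

theorem mk_distinctOddSeries {m : ℕ} (hm : M ≤ 2 * m + 1) :
    π distinctOddSeries = π (oddPoch m) :=
  mk_eq_mk_prod_range_of_hasProd hasProd_distinctOddSeries fun j hj ↦ by
    rw [map_add, map_one, mk_X_pow_eq_zero (by omega), add_zero]

theorem mk_divFourSeries_mul_qPoch {N : ℕ} (hN : M ≤ 4 * N + 4) :
    π divFourSeries * π (qPoch N) = 1 := by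
  have hgeom (j : ℕ) : (∑' k, X ^ ((4 * j + 4) * k)) * (1 - X ^ (4 * j + 4)) = (1 : ℤ⟦X⟧) := by
    simp_rw [pow_mul]
    exact WithPiTopology.tsum_pow_mul_one_sub_of_constantCoeff_eq_zero (by simp)
  rw [mk_eq_mk_prod_range_of_hasProd hasProd_divFourSeries (m := N) fun j hj ↦ ?_, ← map_mul,
    qPoch, ← prod_mul_distrib, prod_congr rfl fun j _ ↦ hgeom j, prod_const_one, map_one]
  have := congrArg π (hgeom j)
  rwa [map_mul, map_sub, map_one, mk_X_pow_eq_zero (by omega), sub_zero, mul_one] at this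

theorem coeff_distinctOddSeries_mul_divFourSeries_sq (n : ℕ) :
    coeff n (distinctOddSeries * divFourSeries ^ 2) =
      ∑ k ∈ Ico (-(2 * n + 2 : ℕ) : ℤ) ((2 * n + 2 : ℕ) + 1),
        coeff n (X ^ (2 * k ^ 2 + k).toNat * divFourSeries ^ 3) := by
  have hD := mk_distinctOddSeries (M := n + 1) (m := 2 * (2 * n + 2)) (by omega)
  have hG := mk_divFourSeries_mul_qPoch (M := n + 1) (N := n + 1) (by omega)
  have hJ := mk_oddPoch_mul_qPoch (M := n + 1) (N := n + 1) (n := 2 * n + 2) (by omega) (by omega)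
  rw [← map_sum, ← sum_mul]
  refine (mk_eq_mk_iff_coeff (M := n + 1)).1 ?_ n (by omega)
  set q := Ideal.Quotient.mk (Ideal.span {(X : ℤ⟦X⟧) ^ (n + 1)})
  rw [map_mul] at hJ
  simp only [map_mul, map_pow]
  -- with `G = divFourSeries`: `distinctOddSeries · G² ≡ oddPoch · G² ≡ oddPoch · qPoch · G³`
  linear_combination q divFourSeries ^ 2 * hD + q divFourSeries ^ 3 * hJ -
    q (oddPoch (2 * (2 * n + 2))) * q divFourSeries ^ 2 * hG

end TruncatedTripleProduct

/-- `b(3n+2) ≡ 0 (mod 3)` for all `n ≥ 0`. -/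
theorem bTriple_3n_add_2_mod_three (n : ℕ) : bTriple (3 * n + 2) % 3 = 0 := by
  suffices (3 : ℤ) ∣ bTriple (3 * n + 2) by omega
  rw [bTriple_eq_coeff, coeff_distinctOddSeries_mul_divFourSeries_sq]
  refine dvd_sum fun k _ ↦ ?_
  rw [coeff_X_pow_mul']
  split_ifs with hk
  · refine three_dvd_coeff_weightSeries_pow_three
      (finite_subtype_sum _ fun m hm x hx ↦ (hm x hx).1) ?_
    have := two_mul_sq_add_self_toNat_mod_three k
    omega
  · exact dvd_zero 3
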